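/- For every integer n ≥ 1, the central odd-case symmetric binomial probability satisfies (πn)^{-1/2} · exp(−1/n) < a*_{0,n} < (πn)^{-1/2} · exp(2/(3n)). -/

import Mathlib

/-!
Doubling the middle entry of row `2n - 1` of Pascal's triangle gives `a*_{0,n} = C(2n, n) / 4^n`,
and Wallis' product `W n` satisfies `(2n + 1) · W n · (C(2n, n) / 4^n)² = 1`. The Wallis bounds
`(2n + 1)/(2n + 2) · π/2 ≤ W n ≤ π/2` then place `C(2n, n) / 4^n` between `1/√(π(n + 1/2))` and
`1/√(πn)`. The exponential factors only weaken this: `exp (2/(3n)) ≥ 1`, and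
`exp (-2/n) < 1/(1 + 2/n) ≤ n/(n + 1/2)`.
-/

open Real

/-- `a0star n = C(2n−1, n−1) · 2^(−2n+1)`: the central odd-case symmetric binomial
probability. -/
noncomputable def a0star (n : ℕ) : ℝ :=
  ((2 * n - 1).choose (n - 1) : ℝ) * (2 : ℝ) ^ (-(2 * (n : ℤ)) + 1)

open Nat

theorem Nat.centralBinom_succ_eq_two_mul_choose (m : ℕ) :
    centralBinom (m + 1) = 2 * (2 * m + 1).choose m := by
  rw [centralBinom_eq_two_mul_choose, show 2 * (m + 1) = 2 * m + 1 + 1 by ring, choose_succ_succ,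
    choose_symm_half]
  ring

theorem Nat.centralBinom_mul_factorial_mul_factorial (n : ℕ) :
    centralBinom n * n ! * n ! = (2 * n)! := by
  have h := choose_mul_factorial_mul_factorial (show n ≤ 2 * n by omega)
  rwa [show 2 * n - n = n by omega, ← centralBinom_eq_two_mul_choose] at h

theorem a0star_eq_centralBinom_div_four_pow {n : ℕ} (hn : n ≠ 0) :
    a0star n = centralBinom n / 4 ^ n := by
  obtain ⟨m, rfl⟩ := exists_eq_succ_of_ne_zero hn
  rw [a0star, centralBinom_succ_eq_two_mul_choose, show 2 * (m + 1) - 1 = 2 * m + 1 by omega,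
    show -(2 * ((m + 1 : ℕ) : ℤ)) + 1 = -(2 * m + 1 : ℕ) by push_cast; ring, zpow_neg, zpow_natCast]
  push_cast
  rw [pow_succ, pow_succ, pow_mul]
  ring

theorem two_mul_add_one_mul_W_mul_sq_centralBinom_div (n : ℕ) :
    (2 * n + 1) * Wallis.W n * ((centralBinom n : ℝ) / 4 ^ n) ^ 2 = 1 := by
  have hfac : (centralBinom n : ℝ) * n ! * n ! = (2 * n)! := by
    exact_mod_cast centralBinom_mul_factorial_mul_factorial n
  rw [Wallis.W_eq_factorial_ratio, ← hfac, show (2 : ℝ) ^ (4 * n) = (4 ^ n) ^ 2 by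
    rw [← pow_mul, show (4 : ℝ) = 2 ^ 2 by norm_num, ← pow_mul]; ring_nf]
  have := centralBinom_pos n
  field_simp

theorem inv_pi_mul_add_half_le_sq_centralBinom_div (n : ℕ) :
    (π * (n + 1 / 2))⁻¹ ≤ ((centralBinom n : ℝ) / 4 ^ n) ^ 2 := by
  rw [inv_le_iff_one_le_mul₀ (by positivity)]
  calc 1 = (2 * n + 1) * Wallis.W n * ((centralBinom n : ℝ) / 4 ^ n) ^ 2 :=
        (two_mul_add_one_mul_W_mul_sq_centralBinom_div n).symm
    _ ≤ (2 * n + 1) * (π / 2) * ((centralBinom n : ℝ) / 4 ^ n) ^ 2 := by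
        gcongr; exact Wallis.W_le n
    _ = _ := by ring

theorem sq_centralBinom_div_lt_inv_pi_mul {n : ℕ} (hn : n ≠ 0) :
    ((centralBinom n : ℝ) / 4 ^ n) ^ 2 < (π * n)⁻¹ := by
  have hq : (0 : ℝ) < centralBinom n / 4 ^ n := by have := centralBinom_pos n; positivity
  set q := (centralBinom n : ℝ) / 4 ^ n
  have hx : (0 : ℝ) < n := by positivity
  have hW : (2 * n + 1) * Wallis.W n * q ^ 2 = 1 := two_mul_add_one_mul_W_mul_sq_centralBinom_div n
  have hWπ : (2 * n + 1) * (π / 2) ≤ Wallis.W n * (2 * n + 2) := by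
    have := Wallis.le_W n
    rwa [div_mul_eq_mul_div, div_le_iff₀ (by positivity)] at this
  have hπq : (2 * n + 1) ^ 2 * (π * q ^ 2) ≤ 4 * (n + 1) := by
    nlinarith [mul_le_mul_of_nonneg_right hWπ (by positivity : (0 : ℝ) ≤ (2 * n + 1) * q ^ 2)]
  rw [← one_div, lt_div_iff₀ (by positivity)]
  -- `4n(n + 1) < (2n + 1)²`
  nlinarith [mul_pos pi_pos (pow_pos hq 2)]

theorem stmt_7 (n : ℕ) (hn : 1 ≤ n) :
    (Real.sqrt (Real.pi * n))⁻¹ * Real.exp (-(1 / (n : ℝ))) < a0star n ∧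
    a0star n < (Real.sqrt (Real.pi * n))⁻¹ * Real.exp (2 / (3 * (n : ℝ))) := by
  have hn₀ : n ≠ 0 := by omega
  have hπn : 0 < π * n := by positivity
  rw [a0star_eq_centralBinom_div_four_pow hn₀]
  have hq : (0 : ℝ) ≤ centralBinom n / 4 ^ n := by positivity
  constructor
  · refine lt_of_pow_lt_pow_left₀ 2 hq ?_
    calc ((√(π * n))⁻¹ * exp (-(1 / n))) ^ 2 = (π * n)⁻¹ * (exp (2 / n))⁻¹ := by
          rw [mul_pow, inv_pow, sq_sqrt hπn.le, ← exp_nat_mul, ← exp_neg]; ring_nf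
      _ < (π * n)⁻¹ * (2 / n + 1 : ℝ)⁻¹ := by
          gcongr; exact add_one_lt_exp (by positivity)
      _ = (π * (n + 2))⁻¹ := by field_simp; ring
      _ ≤ (π * (n + 1 / 2))⁻¹ := by gcongr; norm_num
      _ ≤ _ := inv_pi_mul_add_half_le_sq_centralBinom_div n
  · calc (centralBinom n : ℝ) / 4 ^ n < (√(π * n))⁻¹ := by
          rw [← sqrt_inv, lt_sqrt hq]; exact sq_centralBinom_div_lt_inv_pi_mul hn₀
      _ ≤ _ := le_mul_of_one_le_right (by positivity) (one_le_exp (by positivity))
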